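/- arXiv:2310.13591 — 6 statements merged into one kernel-verified Lean document; each statement's English description precedes it below -/
import Mathlib

section
/- Let N > 1, 0 ≤ ε < 1, Nε < 1, and let Q₁ = (√(N(1−ε)) − √(1−Nε))². If 0 < Q < Q₁, then the quadratic equation (1−Nε)α² + (1+Q−N)α + Q = 0 has two distinct real roots α₋, α₊ and both roots are strictly positive. -/
open Real

theorem stmt1 (N ε Q : ℝ) (hN : 1 < N) (hε0 : 0 ≤ ε) (hε1 : ε < 1)
    (hNε : N * ε < 1) (hQ0 : 0 < Q)
    (hQ1 : Q < (Real.sqrt (N * (1 - ε)) - Real.sqrt (1 - N * ε)) ^ 2) :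
    ∃ a b : ℝ, a < b ∧ 0 < a ∧ 0 < b ∧
      (1 - N * ε) * a ^ 2 + (1 + Q - N) * a + Q = 0 ∧
      (1 - N * ε) * b ^ 2 + (1 + Q - N) * b + Q = 0 ∧
      (∀ x : ℝ, (1 - N * ε) * x ^ 2 + (1 + Q - N) * x + Q = 0 → x = a ∨ x = b) := by
  set s := Real.sqrt (N * (1 - ε)) with hs
  set t := Real.sqrt (1 - N * ε) with ht
  have hA : 0 < 1 - N * ε := by linarith
  have hs0 : (0:ℝ) ≤ N * (1 - ε) := by nlinarith
  have hs2 : s ^ 2 = N * (1 - ε) := Real.sq_sqrt hs0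
  have ht2 : t ^ 2 = 1 - N * ε := Real.sq_sqrt hA.le
  have hsnn : 0 ≤ s := Real.sqrt_nonneg _
  have htnn : 0 ≤ t := Real.sqrt_nonneg _
  have hts : t ≤ s := by nlinarith
  have hQ2 : Q < (s + t) ^ 2 := by nlinarith [mul_nonneg hsnn htnn]
  have hD : 0 < (1 + Q - N) ^ 2 - 4 * (1 - N * ε) * Q := by
    nlinarith [mul_pos (show (0:ℝ) < (s - t)^2 - Q by linarith)
      (show (0:ℝ) < (s + t)^2 - Q by linarith)]
  have hB : Q < N - 1 := by nlinarith [mul_nonneg htnn (sub_nonneg.2 hts)]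
  set d := Real.sqrt ((1 + Q - N) ^ 2 - 4 * (1 - N * ε) * Q) with hd
  have hd2 : d ^ 2 = (1 + Q - N) ^ 2 - 4 * (1 - N * ε) * Q := Real.sq_sqrt hD.le
  have hdpos : 0 < d := Real.sqrt_pos.2 hD
  have hdlt : d < N - 1 - Q := by nlinarith [mul_pos hA hQ0]
  have h2A : 0 < 2 * (1 - N * ε) := by linarith
  have hA2 : (2 * (1 - N * ε)) ≠ 0 := ne_of_gt h2A
  have h4A : (4 * (1 - N * ε)) ≠ 0 := by positivity
  set a := (N - 1 - Q - d) / (2 * (1 - N * ε)) with hadef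
  set b := (N - 1 - Q + d) / (2 * (1 - N * ε)) with hbdef
  have haa : 2 * (1 - N * ε) * a = N - 1 - Q - d := by
    rw [hadef]; field_simp
  have hbb : 2 * (1 - N * ε) * b = N - 1 - Q + d := by
    rw [hbdef]; field_simp
  have ea : (1 - N * ε) * a ^ 2 + (1 + Q - N) * a + Q = 0 := by
    apply mul_left_cancel₀ h4A
    rw [mul_zero]
    linear_combination (2 * (1 - N * ε) * a + (N - 1 - Q - d) + 2 * (1 + Q - N)) * haa + hd2
  have eb : (1 - N * ε) * b ^ 2 + (1 + Q - N) * b + Q = 0 := by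
    apply mul_left_cancel₀ h4A
    rw [mul_zero]
    linear_combination (2 * (1 - N * ε) * b + (N - 1 - Q + d) + 2 * (1 + Q - N)) * hbb + hd2
  refine ⟨a, b, ?_, ?_, ?_, ea, eb, ?_⟩
  · rw [hadef, hbdef, div_lt_div_iff₀ h2A h2A]; nlinarith
  · rw [hadef]; exact div_pos (by linarith) h2A
  · rw [hbdef]; exact div_pos (by linarith) h2A
  · intro x hx
    have key : 4 * (1 - N * ε) ^ 2 * ((x - a) * (x - b)) = 0 := by
      linear_combination (2 * (1 - N * ε) * b - 2 * (1 - N * ε) * x) * haa +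
        (N - 1 - Q - d - 2 * (1 - N * ε) * x) * hbb + 4 * (1 - N * ε) * hx - hd2
    have h4A2 : (4 * (1 - N * ε) ^ 2) ≠ 0 := by positivity
    rcases mul_eq_zero.1 ((mul_eq_zero.1 key).resolve_left h4A2) with h | h
    · exact Or.inl (by linarith [sub_eq_zero.1 h])
    · exact Or.inr (by linarith [sub_eq_zero.1 h])
end

section
/- Let N > 1, 0 ≤ ε < 1, Nε < 1, and let Q₂ = (√(N(1−ε)) + √(1−Nε))². If Q > Q₂, then both real roots of the quadratic (1−Nε)α² + (1+Q−N)α + Q = 0 are strictly negative. -/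
/-! The discriminant of `(1 - Nε) α² + (1 + Q - N) α + Q` factors as `(Q - (s + t)²) (Q - (s - t)²)`
with `s = √(N(1 - ε))`, `t = √(1 - Nε)`, so `Q > (s + t)²` gives two distinct real roots; since all
coefficients are positive, the quadratic is positive on `[0, ∞)` and both roots are negative. -/

open Real

theorem exists_lt_roots_of_discrim_pos {a b c : ℝ} (ha : 0 < a) (hd : 0 < discrim a b c) :
    ∃ r₁ r₂ : ℝ, r₁ < r₂ ∧ ∀ x, a * x ^ 2 + b * x + c = 0 ↔ x = r₁ ∨ x = r₂ := by
  have hsq : discrim a b c = √(discrim a b c) * √(discrim a b c) := (mul_self_sqrt hd.le).symm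
  refine ⟨(-b - √(discrim a b c)) / (2 * a), (-b + √(discrim a b c)) / (2 * a), ?_, fun x => ?_⟩
  · gcongr
    linarith [sqrt_pos.mpr hd]
  · rw [sq, quadratic_eq_zero_iff ha.ne' hsq, or_comm]

theorem neg_of_quadratic_eq_zero {a b c x : ℝ} (ha : 0 ≤ a) (hb : 0 ≤ b) (hc : 0 < c)
    (hx : a * x ^ 2 + b * x + c = 0) : x < 0 := by
  by_contra! hx0
  have : 0 < a * x ^ 2 + b * x + c := by positivity
  linarith

theorem discrim_sq_eq (s t Q : ℝ) :
    discrim (t ^ 2) (Q - s ^ 2 + t ^ 2) Q = (Q - (s + t) ^ 2) * (Q - (s - t) ^ 2) := by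
  rw [discrim]; ring

theorem discrim_sq_pos {s t Q : ℝ} (hs : 0 ≤ s) (ht : 0 ≤ t) (hQ : (s + t) ^ 2 < Q) :
    0 < discrim (t ^ 2) (Q - s ^ 2 + t ^ 2) Q := by
  have hst : (s - t) ^ 2 ≤ (s + t) ^ 2 := by nlinarith [mul_nonneg hs ht]
  rw [discrim_sq_eq]
  exact mul_pos (by linarith) (by linarith)

theorem stmt2_general (N ε Q : ℝ) (hN : 1 < N)
    (hNε : N * ε < 1)
    (hQ : (Real.sqrt (N * (1 - ε)) + Real.sqrt (1 - N * ε)) ^ 2 < Q) :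
    ∃ a b : ℝ, a < b ∧ a < 0 ∧ b < 0 ∧
      (1 - N * ε) * a ^ 2 + (1 + Q - N) * a + Q = 0 ∧
      (1 - N * ε) * b ^ 2 + (1 + Q - N) * b + Q = 0 ∧
      (∀ x : ℝ, (1 - N * ε) * x ^ 2 + (1 + Q - N) * x + Q = 0 → x = a ∨ x = b) := by
  set s := √(N * (1 - ε))
  set t := √(1 - N * ε)
  have hA : 0 < 1 - N * ε := by linarith
  have hs : s ^ 2 = N * (1 - ε) := sq_sqrt (by linarith)
  have ht : t ^ 2 = 1 - N * ε := sq_sqrt hA.le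
  have hB : 1 + Q - N = Q - s ^ 2 + t ^ 2 := by rw [hs, ht]; ring
  have hsQ : s ^ 2 < Q := by nlinarith [sqrt_nonneg (N * (1 - ε)), sqrt_nonneg (1 - N * ε)]
  have hd : 0 < discrim (1 - N * ε) (1 + Q - N) Q := by
    rw [hB, ← ht]
    exact discrim_sq_pos (sqrt_nonneg _) (sqrt_nonneg _) hQ
  obtain ⟨a, b, hab, hroots⟩ := exists_lt_roots_of_discrim_pos hA hd
  have hneg : ∀ x, (1 - N * ε) * x ^ 2 + (1 + Q - N) * x + Q = 0 → x < 0 := fun x hx =>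
    neg_of_quadratic_eq_zero hA.le (by rw [hB]; linarith [sq_nonneg t])
      ((sq_nonneg s).trans_lt hsQ) hx
  have ha := (hroots a).2 (Or.inl rfl)
  have hb := (hroots b).2 (Or.inr rfl)
  exact ⟨a, b, hab, hneg a ha, hneg b hb, ha, hb, fun x => (hroots x).1⟩

theorem stmt2 (N ε Q : ℝ) (hN : 1 < N) (hε0 : 0 ≤ ε) (hε1 : ε < 1)
    (hNε : N * ε < 1)
    (hQ : (Real.sqrt (N * (1 - ε)) + Real.sqrt (1 - N * ε)) ^ 2 < Q) :
    ∃ a b : ℝ, a < b ∧ a < 0 ∧ b < 0 ∧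
      (1 - N * ε) * a ^ 2 + (1 + Q - N) * a + Q = 0 ∧
      (1 - N * ε) * b ^ 2 + (1 + Q - N) * b + Q = 0 ∧
      (∀ x : ℝ, (1 - N * ε) * x ^ 2 + (1 + Q - N) * x + Q = 0 → x = a ∨ x = b) :=
  stmt2_general N ε Q hN hNε hQ
end

section
/- The equilibrium of the wild insect model without SIT satisfies: A* = ((γ+μ_A1)/μ_A2)(N−1), M* = (1−r)γA*/μ_M, F* = rγA*/μ_S with N = rγφ/(μ_S(γ+μ_A1)); and (A*, M*, F*) has all strictly positive coordinates if and only if N > 1. -/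
theorem stmt10 (φ γ μA1 μA2 μM μS r : ℝ)
    (hφ : 0 < φ) (hγ : 0 < γ) (hμA1 : 0 < μA1) (hμA2 : 0 < μA2)
    (hμM : 0 < μM) (hμS : 0 < μS) (hr0 : 0 < r) (hr1 : r < 1) :
    let N := r * γ * φ / (μS * (γ + μA1))
    let Astar := ((γ + μA1) / μA2) * (N - 1)
    let Mstar := (1 - r) * γ * Astar / μM
    let Fstar := r * γ * Astar / μS
    (φ * Fstar = (γ + μA1 + μA2 * Astar) * Astar ∧
     (1 - r) * γ * Astar = μM * Mstar ∧
     r * γ * Astar = μS * Fstar) ∧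
    ((0 < Astar ∧ 0 < Mstar ∧ 0 < Fstar) ↔ 1 < N) := by
  intro N Astar Mstar Fstar
  have hsum : 0 < γ + μA1 := by linarith
  have hN : N = r * γ * φ / (μS * (γ + μA1)) := rfl
  have hA : Astar = ((γ + μA1) / μA2) * (N - 1) := rfl
  have hM : Mstar = (1 - r) * γ * Astar / μM := rfl
  have hF : Fstar = r * γ * Astar / μS := rfl
  constructor
  · refine ⟨?_, ?_, ?_⟩
    · rw [hF, hA, hN]
      field_simp
      ring
    · rw [hM]; field_simp
    · rw [hF]; field_simp
  · have hApos : 0 < Astar ↔ 1 < N := by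
      rw [hA]
      constructor
      · intro h
        by_contra hle
        push_neg at hle
        nlinarith [div_pos hsum hμA2]
      · intro h
        have := div_pos hsum hμA2
        nlinarith
    constructor
    · rintro ⟨h, _, _⟩; exact hApos.mp h
    · intro h
      have hA' := hApos.mpr h
      refine ⟨hA', ?_, ?_⟩
      · rw [hM]
        have h1r : 0 < 1 - r := by linarith
        positivity
      · rw [hF]; positivity
end

section
/- Any nonzero equilibrium (A, M, F) of the SIT entomological model satisfies the relation ((M + εM_S*)/(M + M_S*))·N = 1 + (μ_A2/(γ+μ_A1))·A, where M = ((1−r)γ/μ_M)·A; equivalently, with α := M_S*/M and Q_S := M_S*·(μ_A2 μ_M)/((γ+μ_A1)(1−r)γ), the equation (1−Nε)α² + (1+Q_S−N)α + Q_S = 0 holds. -/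
/-!
Multiplying the sterile-mating balance `ρ r γ A = μS F` by `φ` and substituting the larval
balance `φ F = (γ + μA1 + μA2 A) A` gives `ρ N = 1 + μA2 A / (γ + μA1)` after cancelling `A`,
where `ρ = (M + ε MS) / (M + MS)`. Since `A` is proportional to `M`, the right-hand side is
`1 + QS / α` with `α = MS / M`, and `ρ = (1 + ε α) / (1 + α)`; clearing denominators yields the
quadratic in `α`.
-/

section

variable {K : Type*} [Field K]

def basicOffspringNumber (φ γ μA1 μS r : K) : K := r * γ * φ / (μS * (γ + μA1))

theorem mul_basicOffspringNumber_eq_of_equilibrium {φ γ μA1 μA2 μS r A F ρ : K}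
    (hA : A ≠ 0) (hμS : μS ≠ 0) (hγμA1 : γ + μA1 ≠ 0)
    (hlarvae : φ * F = (γ + μA1 + μA2 * A) * A) (hmating : ρ * (r * γ) * A = μS * F) :
    ρ * basicOffspringNumber φ γ μA1 μS r = 1 + μA2 / (γ + μA1) * A := by
  have hcancel : (ρ * r * γ * φ) * A = (μS * (γ + μA1 + μA2 * A)) * A := by
    linear_combination φ * hmating + μS * hlarvae
  have hbalance := mul_right_cancel₀ hA hcancel
  unfold basicOffspringNumber
  field_simp
  linear_combination hbalance

theorem quadratic_div_eq_zero_of_div_mul_eq {M MS ε N c : K} (hM : M ≠ 0) (hMMS : M + MS ≠ 0)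
    (h : (M + ε * MS) / (M + MS) * N = 1 + c * M) :
    (1 - N * ε) * (MS / M) ^ 2 + (1 + c * MS - N) * (MS / M) + c * MS = 0 := by
  field_simp at h ⊢
  linear_combination (-MS) * h

end

theorem stmt11_general (φ γ μA1 μA2 μM μS MS r ε A M F : ℝ)
    (hγ : 0 < γ) (hμA1 : 0 < μA1)
    (hμM : 0 < μM) (hμS : 0 < μS) (hMS : 0 < MS)
    (hr1 : r < 1)
    (hA : 0 < A)
    (heq1 : φ * F = (γ + μA1 + μA2 * A) * A)
    (heq2 : (1 - r) * γ * A = μM * M)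
    (heq3 : ((M + ε * MS) / (M + MS)) * (r * γ) * A = μS * F) :
    let N := r * γ * φ / (μS * (γ + μA1))
    let α := MS / M
    let QS := MS * (μA2 * μM) / ((γ + μA1) * (1 - r) * γ)
    ((M + ε * MS) / (M + MS)) * N = 1 + (μA2 / (γ + μA1)) * A ∧
    (1 - N * ε) * α ^ 2 + (1 + QS - N) * α + QS = 0 := by
  intro N α QS
  have h1r : 0 < 1 - r := by linarith
  have hM : 0 < M := pos_of_mul_pos_right (heq2 ▸ by positivity) hμM.le
  have hrelation := mul_basicOffspringNumber_eq_of_equilibrium hA.ne' hμS.ne'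
    (by positivity) heq1 heq3
  refine ⟨hrelation, ?_⟩
  have hAM : μA2 / (γ + μA1) * A = μA2 * μM / ((γ + μA1) * (1 - r) * γ) * M := by
    field_simp
    linear_combination μA2 * heq2
  have hQS : QS = μA2 * μM / ((γ + μA1) * (1 - r) * γ) * MS := by
    simp only [QS]; ring
  rw [hAM] at hrelation
  rw [hQS]
  exact quadratic_div_eq_zero_of_div_mul_eq hM.ne' (by positivity) hrelation

theorem stmt11 (φ γ μA1 μA2 μM μS MS r ε A M F : ℝ)
    (hφ : 0 < φ) (hγ : 0 < γ) (hμA1 : 0 < μA1) (hμA2 : 0 < μA2)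
    (hμM : 0 < μM) (hμS : 0 < μS) (hMS : 0 < MS)
    (hr0 : 0 < r) (hr1 : r < 1) (hε0 : 0 ≤ ε) (hε1 : ε < 1)
    (hA : 0 < A)
    (heq1 : φ * F = (γ + μA1 + μA2 * A) * A)
    (heq2 : (1 - r) * γ * A = μM * M)
    (heq3 : ((M + ε * MS) / (M + MS)) * (r * γ) * A = μS * F) :
    let N := r * γ * φ / (μS * (γ + μA1))
    let α := MS / M
    let QS := MS * (μA2 * μM) / ((γ + μA1) * (1 - r) * γ)
    ((M + ε * MS) / (M + MS)) * N = 1 + (μA2 / (γ + μA1)) * A ∧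
    (1 - N * ε) * α ^ 2 + (1 + QS - N) * α + QS = 0 :=
  stmt11_general φ γ μA1 μA2 μM μS MS r ε A M F hγ hμA1 hμM hμS hMS hr1 hA heq1 heq2 heq3
end

section
/- Let N > 1, Nε > 1, Q_S > 0, A* > 0, R₀² > 1 and 0 ≤ c < 1 (with c = ε_F Λ_tot/Λ_F^crit). Define R²_{0,SITc} = c + (R₀²/2)·(1 − Q_S/(N−1) + √((1 − Q_S/(N−1))² + 4Q_S(Nε−1)/(N−1)²)). Then R²_{0,SITc} > 1 if and only if Q_S·(1 − R₀²(Nε−1)/((N−1)(1−c))) < (N−1)·(1 − (1−c)/R₀²). -/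
open Real

/-- Squaring `t - a < √(a ^ 2 + X)` is only legitimate when `t - a ≥ 0`; when `t ≤ a` both sides
hold trivially. -/
lemma lt_add_sqrt_sq_add_iff {t a X : ℝ} (ht : 0 < t) (hX : 0 ≤ X) :
    t < a + √(a ^ 2 + X) ↔ t * (t - 2 * a) < X := by
  rcases le_or_gt t a with hta | hat
  · have hsqrt : a ≤ √(a ^ 2 + X) :=
      Real.le_sqrt_of_sq_le (by linarith)
    exact iff_of_true (by linarith) (by nlinarith)
  · rw [← sub_lt_iff_lt_add', Real.lt_sqrt (by linarith)]
    constructor <;> intro h <;> nlinarith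

theorem stmt15_general (N ε QS R0sq c : ℝ) (hN : 1 < N) (hNε : 1 < N * ε)
    (hQS : 0 < QS) (hR0 : 1 < R0sq) (hc1 : c < 1) :
    1 < c + (R0sq / 2) * (1 - QS / (N - 1) +
        Real.sqrt ((1 - QS / (N - 1)) ^ 2 +
          4 * QS * (N * ε - 1) / (N - 1) ^ 2)) ↔
      QS * (1 - R0sq * (N * ε - 1) / ((N - 1) * (1 - c))) <
        (N - 1) * (1 - (1 - c) / R0sq) := by
  have hm : 0 < N - 1 := by linarith
  have hk : 0 < 1 - c := by linarith
  have hR : 0 < R0sq := by linarith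
  have hX : 0 ≤ 4 * QS * (N * ε - 1) / (N - 1) ^ 2 :=
    div_nonneg (mul_nonneg (by positivity) (by linarith)) (sq_nonneg _)
  -- The squared form of the threshold condition is a positive multiple of the claimed one.
  have hfactor : 4 * QS * (N * ε - 1) / (N - 1) ^ 2 -
        2 * (1 - c) / R0sq * (2 * (1 - c) / R0sq - 2 * (1 - QS / (N - 1))) =
      4 * (1 - c) / (R0sq * (N - 1)) * ((N - 1) * (1 - (1 - c) / R0sq) -
        QS * (1 - R0sq * (N * ε - 1) / ((N - 1) * (1 - c)))) := by
    field_simp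
    ring
  have hthreshold : ∀ y : ℝ, 1 < c + R0sq / 2 * y ↔ 2 * (1 - c) / R0sq < y := fun y => by
    rw [div_lt_iff₀ hR]
    constructor <;> intro h <;> linarith
  rw [hthreshold, lt_add_sqrt_sq_add_iff (by positivity) hX, ← sub_pos, hfactor,
    mul_pos_iff_of_pos_left (by positivity), sub_pos]

theorem stmt15 (N ε QS R0sq c : ℝ) (hN : 1 < N) (hNε : 1 < N * ε)
    (hQS : 0 < QS) (hR0 : 1 < R0sq) (hc0 : 0 ≤ c) (hc1 : c < 1) :
    1 < c + (R0sq / 2) * (1 - QS / (N - 1) +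
        Real.sqrt ((1 - QS / (N - 1)) ^ 2 +
          4 * QS * (N * ε - 1) / (N - 1) ^ 2)) ↔
      QS * (1 - R0sq * (N * ε - 1) / ((N - 1) * (1 - c))) <
        (N - 1) * (1 - (1 - c) / R0sq) :=
  stmt15_general N ε QS R0sq c hN hNε hQS hR0 hc1
end

section
/- For the endemic-equilibrium quadratic Q·((1−r)γ/μ_M)²A² + ((1−r)γ/μ_M)(Q M_S* − N)A + (1−Nε)M_S* = 0: if Nε > 1 then its discriminant is strictly positive and it has exactly one strictly positive root A* = (1/(2Q(1−r)γ/μ_M))·(N − Q M_S* + √((Q M_S* − N)² + 4Q(Nε−1)M_S*)). -/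
open Real

theorem stmt17 (Q γ μM MS N r ε : ℝ)
    (hQ : 0 < Q) (hγ : 0 < γ) (hμM : 0 < μM) (hMS : 0 < MS)
    (hN : 1 < N) (hr0 : 0 < r) (hr1 : r < 1) (hNε : 1 < N * ε) :
    0 < (((1 - r) * γ / μM) * (Q * MS - N)) ^ 2 -
        4 * (Q * ((1 - r) * γ / μM) ^ 2) * ((1 - N * ε) * MS) ∧
    (let Astar := (1 / (2 * Q * ((1 - r) * γ / μM))) *
        (N - Q * MS + Real.sqrt ((Q * MS - N) ^ 2 + 4 * Q * (N * ε - 1) * MS));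
     Q * ((1 - r) * γ / μM) ^ 2 * Astar ^ 2 +
        ((1 - r) * γ / μM) * (Q * MS - N) * Astar + (1 - N * ε) * MS = 0 ∧
     0 < Astar ∧
     ∀ x : ℝ, Q * ((1 - r) * γ / μM) ^ 2 * x ^ 2 +
        ((1 - r) * γ / μM) * (Q * MS - N) * x + (1 - N * ε) * MS = 0 →
        0 < x → x = Astar) := by
  set k : ℝ := (1 - r) * γ / μM with hk
  have hkpos : 0 < k := div_pos (mul_pos (by linarith) hγ) hμM
  set D : ℝ := (Q * MS - N) ^ 2 + 4 * Q * (N * ε - 1) * MS with hD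
  have h4pos : 0 < 4 * Q * (N * ε - 1) * MS :=
    mul_pos (mul_pos (mul_pos (by norm_num) hQ) (by linarith)) hMS
  have hDpos : 0 < D := by rw [hD]; nlinarith [sq_nonneg (Q * MS - N)]
  have hs : Real.sqrt D ^ 2 = D := Real.sq_sqrt hDpos.le
  have hsnn : 0 ≤ Real.sqrt D := Real.sqrt_nonneg D
  have habs : |Q * MS - N| < Real.sqrt D := by
    rw [← Real.sqrt_sq_eq_abs]
    exact Real.sqrt_lt_sqrt (sq_nonneg _) (by rw [hD]; linarith)
  have hsgt : Q * MS - N < Real.sqrt D := (le_abs_self _).trans_lt habs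
  have hsgt2 : N - Q * MS < Real.sqrt D := by
    have := neg_le_abs (Q * MS - N); linarith
  set A : ℝ := (1 / (2 * Q * k)) * (N - Q * MS + Real.sqrt D) with hA
  have hApos : 0 < A := by
    rw [hA]
    have h1 : 0 < N - Q * MS + Real.sqrt D := by linarith
    positivity
  have hAval : 2 * Q * k * A = N - Q * MS + Real.sqrt D := by
    rw [hA]; field_simp
  have hmul : 4 * Q * (Q * k ^ 2 * A ^ 2 + k * (Q * MS - N) * A + (1 - N * ε) * MS) = 0 := by
    linear_combination (2 * Q * k * A + (N - Q * MS + Real.sqrt D) + 2 * (Q * MS - N)) * hAval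
      + hs + hD
  have hAroot : Q * k ^ 2 * A ^ 2 + k * (Q * MS - N) * A + (1 - N * ε) * MS = 0 := by
    rcases mul_eq_zero.mp hmul with h | h
    · exact absurd h (by positivity)
    · exact h
  refine ⟨?_, hAroot, hApos, ?_⟩
  · have heq : (k * (Q * MS - N)) ^ 2 - 4 * (Q * k ^ 2) * ((1 - N * ε) * MS) = k ^ 2 * D := by
      rw [hD]; ring
    rw [heq]
    exact mul_pos (pow_pos hkpos 2) hDpos
  · intro x hx hxpos
    have hfac : (x - A) * (Q * k ^ 2 * (x + A) + k * (Q * MS - N)) = 0 := by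
      linear_combination hx - hAroot
    rcases mul_eq_zero.mp hfac with h | h
    · linarith
    · exfalso
      have h3 : k * (2 * Q * k * x) = k * (N - Q * MS - Real.sqrt D) := by
        linear_combination 2 * h - k * hAval
      have h4 : 2 * Q * k * x = N - Q * MS - Real.sqrt D :=
        mul_left_cancel₀ hkpos.ne' h3
      have h5 : 0 < 2 * Q * k * x :=
        mul_pos (mul_pos (by linarith) hkpos) hxpos
      linarith
end
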